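/- Let l0, l1, l2 be positive integers. Set d0 = gcd(l1, l2), d1 = gcd(l0, l2), d2 = gcd(l0, l1), a0 = lcm(d1, d2), a1 = lcm(d0, d2), a2 = lcm(d0, d1). Then a0 divides l0, a1 divides l1, a2 divides l2, and the integers l0/a0, l1/a1, l2/a2 are pairwise coprime. -/
import Mathlib

lemma coprime_div_aux (m n a b : ℕ) (hm : m ≠ 0) (hn : n ≠ 0) (ha : a ∣ m) (hb : b ∣ n)
    (h : ∀ p : ℕ, p.Prime →
      m.factorization p - a.factorization p = 0 ∨ n.factorization p - b.factorization p = 0) :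
    Nat.Coprime (m / a) (n / b) := by
  have ha0 : a ≠ 0 := fun h' => hm (by simpa [h'] using ha)
  have hb0 : b ≠ 0 := fun h' => hn (by simpa [h'] using hb)
  have hma : m / a ≠ 0 := Nat.div_ne_zero_iff_of_dvd ha |>.mpr ⟨hm, ha0⟩
  have hnb : n / b ≠ 0 := Nat.div_ne_zero_iff_of_dvd hb |>.mpr ⟨hn, hb0⟩
  rw [Nat.coprime_iff_gcd_eq_one, Nat.eq_one_iff_not_exists_prime_dvd]
  intro p pp hdvd
  have hdm : p ∣ m / a := hdvd.trans (Nat.gcd_dvd_left _ _)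
  have hdn : p ∣ n / b := hdvd.trans (Nat.gcd_dvd_right _ _)
  rw [pp.dvd_iff_one_le_factorization hma, Nat.factorization_div ha] at hdm
  rw [pp.dvd_iff_one_le_factorization hnb, Nat.factorization_div hb] at hdn
  simp only [Finsupp.tsub_apply] at hdm hdn
  rcases h p pp with h' | h' <;> omega

theorem weight_reduction (l0 l1 l2 : ℕ) (h0 : 0 < l0) (h1 : 0 < l1) (h2 : 0 < l2) :
    Nat.lcm (Nat.gcd l0 l2) (Nat.gcd l0 l1) ∣ l0 ∧
    Nat.lcm (Nat.gcd l1 l2) (Nat.gcd l0 l1) ∣ l1 ∧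
    Nat.lcm (Nat.gcd l1 l2) (Nat.gcd l0 l2) ∣ l2 ∧
    Nat.Coprime (l0 / Nat.lcm (Nat.gcd l0 l2) (Nat.gcd l0 l1))
      (l1 / Nat.lcm (Nat.gcd l1 l2) (Nat.gcd l0 l1)) ∧
    Nat.Coprime (l0 / Nat.lcm (Nat.gcd l0 l2) (Nat.gcd l0 l1))
      (l2 / Nat.lcm (Nat.gcd l1 l2) (Nat.gcd l0 l2)) ∧
    Nat.Coprime (l1 / Nat.lcm (Nat.gcd l1 l2) (Nat.gcd l0 l1))
      (l2 / Nat.lcm (Nat.gcd l1 l2) (Nat.gcd l0 l2)) := by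
  have hn0 : l0 ≠ 0 := h0.ne'
  have hn1 : l1 ≠ 0 := h1.ne'
  have hn2 : l2 ≠ 0 := h2.ne'
  have g02 : Nat.gcd l0 l2 ≠ 0 := Nat.gcd_ne_zero_left hn0
  have g01 : Nat.gcd l0 l1 ≠ 0 := Nat.gcd_ne_zero_left hn0
  have g12 : Nat.gcd l1 l2 ≠ 0 := Nat.gcd_ne_zero_left hn1
  have d0 : Nat.lcm (Nat.gcd l0 l2) (Nat.gcd l0 l1) ∣ l0 :=
    Nat.lcm_dvd (Nat.gcd_dvd_left _ _) (Nat.gcd_dvd_left _ _)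
  have d1 : Nat.lcm (Nat.gcd l1 l2) (Nat.gcd l0 l1) ∣ l1 :=
    Nat.lcm_dvd (Nat.gcd_dvd_left _ _) (Nat.gcd_dvd_right _ _)
  have d2 : Nat.lcm (Nat.gcd l1 l2) (Nat.gcd l0 l2) ∣ l2 :=
    Nat.lcm_dvd (Nat.gcd_dvd_right _ _) (Nat.gcd_dvd_right _ _)
  have fact0 : ∀ p : ℕ, (Nat.lcm (Nat.gcd l0 l2) (Nat.gcd l0 l1)).factorization p =
      max (min (l0.factorization p) (l2.factorization p))
          (min (l0.factorization p) (l1.factorization p)) := by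
    intro p
    rw [Nat.factorization_lcm g02 g01, Nat.factorization_gcd hn0 hn2,
      Nat.factorization_gcd hn0 hn1]
    simp [Finsupp.sup_apply, Finsupp.inf_apply]
  have fact1 : ∀ p : ℕ, (Nat.lcm (Nat.gcd l1 l2) (Nat.gcd l0 l1)).factorization p =
      max (min (l1.factorization p) (l2.factorization p))
          (min (l0.factorization p) (l1.factorization p)) := by
    intro p
    rw [Nat.factorization_lcm g12 g01, Nat.factorization_gcd hn1 hn2,
      Nat.factorization_gcd hn0 hn1]
    simp [Finsupp.sup_apply, Finsupp.inf_apply]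
  have fact2 : ∀ p : ℕ, (Nat.lcm (Nat.gcd l1 l2) (Nat.gcd l0 l2)).factorization p =
      max (min (l1.factorization p) (l2.factorization p))
          (min (l0.factorization p) (l2.factorization p)) := by
    intro p
    rw [Nat.factorization_lcm g12 g02, Nat.factorization_gcd hn1 hn2,
      Nat.factorization_gcd hn0 hn2]
    simp [Finsupp.sup_apply, Finsupp.inf_apply]
  refine ⟨d0, d1, d2, ?_, ?_, ?_⟩
  · exact coprime_div_aux _ _ _ _ hn0 hn1 d0 d1 (fun p _ => by rw [fact0 p, fact1 p]; omega)
  · exact coprime_div_aux _ _ _ _ hn0 hn2 d0 d2 (fun p _ => by rw [fact0 p, fact2 p]; omega)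
  · exact coprime_div_aux _ _ _ _ hn1 hn2 d1 d2 (fun p _ => by rw [fact1 p, fact2 p]; omega)
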